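/- arXiv:2109.14232 — 6 statements merged into one kernel-verified Lean document; each statement's English description precedes it below -/
import Mathlib

section
/- For complex variables z_1,…,z_m such that no partial product ∏_{j=i}^m z_{σ_j} equals 1 and all z_i are pairwise distinct, the antisymmetrized sum ∑_{σ∈S_m} sgn(σ) ∏_{i=1}^m [ z_{σ_i}^{i-1} (1-z_{σ_i})^{m-i+1} / (1 - ∏_{j=i}^m z_{σ_j}) ] equals the Vandermonde product ∏_{1≤i<j≤m} (z_j - z_i). -/
/-!
Induct on `m`, splitting a permutation `σ` according to `p = σ 0` (`Equiv.Perm.decomposeFin`).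
The factor `i = 0` is `(1 - z_p)^m / (1 - ∏ z)`, and the remaining factors are those of the
`(m-1)`-variable sum for the `z_j`, `j ≠ p`, each multiplied by `z_j`. By induction the inner
alternating sum is the Vandermonde product of the `z_j`, `j ≠ p`, which equals
`± V(z) / ∏_{j ≠ p} (z_j - z_p)`. What remains is
`∑_p (1 - z_p)^m ∏_{j ≠ p} z_j / (z_j - z_p) = 1 - ∏ z_j`: Lagrange interpolation at `0` of the
polynomial `(-1)^m ((X - 1)^m - ∏_j (X - z_j))`, which has degree `< m` and takes the value
`(1 - z_p)^m` at `z_p`.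
-/

open Finset Polynomial Equiv

theorem Lagrange.eval_basis {F ι : Type*} [Field F] [DecidableEq ι] (s : Finset ι) (v : ι → F)
    (i : ι) (x : F) :
    (Lagrange.basis s v i).eval x = ∏ j ∈ s.erase i, (x - v j) / (v i - v j) := by
  simp [Lagrange.basis, Lagrange.basisDivisor, eval_prod, div_eq_inv_mul]

theorem Lagrange.eval_eq_sum_mul_prod_div {F ι : Type*} [Field F] [DecidableEq ι] {s : Finset ι}
    {v : ι → F} (hvs : Set.InjOn v s) {f : F[X]} (hf : f.degree < #s) (x : F) :
    f.eval x = ∑ i ∈ s, f.eval (v i) * ∏ j ∈ s.erase i, (x - v j) / (v i - v j) := by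
  conv_lhs => rw [Lagrange.eq_interpolate hvs hf]
  simp [Lagrange.interpolate_apply, eval_finsetSum, Lagrange.eval_basis]

theorem Fin.prod_tail_comp_swap_zero {M : Type*} [CommMonoid M] {n : ℕ} (f : Fin (n + 1) → M)
    (p : Fin (n + 1)) : ∏ j, Fin.tail (f ∘ swap 0 p) j = ∏ j ∈ univ.erase p, f j := by
  rw [Fin.tail_def, ← Fin.prod_Ioi_zero]
  refine prod_equiv (swap 0 p) (fun j => ?_) (fun _ _ => rfl)
  simp [swap_apply_eq_iff]

theorem Equiv.Perm.comp_decomposeFin_symm {α : Type*} {n : ℕ} (z : Fin (n + 1) → α)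
    (p : Fin (n + 1)) (e : Perm (Fin n)) :
    z ∘ Perm.decomposeFin.symm (p, e) = Fin.cons (z p) (Fin.tail (z ∘ swap 0 p) ∘ e) := by
  ext i
  cases i using Fin.cases <;> simp [Fin.tail]

theorem prod_Ioi_sub_eq_sign_swap_mul {R : Type*} [CommRing R] {n : ℕ} (z : Fin (n + 1) → R)
    (p : Fin (n + 1)) :
    ∏ i, ∏ j ∈ Ioi i, (z j - z i) = (Perm.sign (swap 0 p) : R) *
      ((∏ j ∈ univ.erase p, (z j - z p)) *
        ∏ i, ∏ j ∈ Ioi i, (Fin.tail (z ∘ swap 0 p) j - Fin.tail (z ∘ swap 0 p) i)) := by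
  have h := (swap 0 p).prod_Ioi_comp_eq_sign_mul_prod (f := fun i j => z j - z i) (by simp)
  rw [Fin.prod_univ_succ, Fin.prod_Ioi_zero] at h
  simp only [Fin.prod_Ioi_succ, swap_apply_left] at h
  have hsq : (Perm.sign (swap 0 p) : R) * Perm.sign (swap 0 p) = 1 := by
    rw [← Int.cast_mul, ← Units.val_mul, Int.units_mul_self, Units.val_one, Int.cast_one]
  rw [← Fin.prod_tail_comp_swap_zero (fun j => z j - z p)]
  simp only [Fin.tail, Function.comp_apply]
  rw [h, ← mul_assoc, hsq, one_mul]

section Field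

variable {K : Type*} [Field K]

theorem sum_one_sub_pow_mul_prod_div_eq_one_sub_prod {m : ℕ} {z : Fin m → K}
    (hz : Function.Injective z) :
    ∑ p, (1 - z p) ^ m * ∏ j ∈ univ.erase p, z j / (z j - z p) = 1 - ∏ j, z j := by
  set f : K[X] := C ((-1) ^ m) * ((X - C 1) ^ m - Lagrange.nodal univ z)
  have hf : f.degree < #(univ : Finset (Fin m)) := by
    have hmonic : ((X - C 1 : K[X]) ^ m).Monic := (monic_X_sub_C 1).pow m
    have hdeg : ((X - C 1 : K[X]) ^ m).degree = m := by rw [degree_pow, degree_X_sub_C]; simp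
    rw [degree_C_mul (by simp), card_univ, Fintype.card_fin, ← hdeg]
    exact degree_sub_lt_left (by rw [hdeg, Lagrange.degree_nodal]; simp) hmonic.ne_zero
      (by rw [hmonic.leadingCoeff, Lagrange.nodal_monic.leadingCoeff])
  have hsign : ((-1 : K) ^ m) * (-1) ^ m = 1 := by rw [← mul_pow]; norm_num
  have h0 : f.eval 0 = 1 - ∏ j, z j := by
    simp [f, Lagrange.eval_nodal, prod_neg, mul_sub, ← mul_assoc, hsign]
  have hnode : ∀ p, f.eval (z p) = (1 - z p) ^ m := by
    intro p
    simp [f, Lagrange.eval_nodal_at_node, ← mul_pow]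
  rw [← h0, Lagrange.eval_eq_sum_mul_prod_div hz.injOn hf 0]
  refine sum_congr rfl fun p _ => ?_
  rw [hnode]
  congr 1
  refine prod_congr rfl fun j _ => ?_
  rw [zero_sub, neg_div, ← div_neg, neg_sub]

def antisymSummand {n : ℕ} (w : Fin n → K) : K :=
  ∏ i : Fin n, w i ^ (i : ℕ) * (1 - w i) ^ (n - i) / (1 - ∏ j ∈ Ici i, w j)

theorem antisymSummand_cons {n : ℕ} (a : K) (v : Fin n → K) :
    antisymSummand (Fin.cons a v : Fin (n + 1) → K) =
      (1 - a) ^ (n + 1) / (1 - a * ∏ i, v i) * ((∏ i, v i) * antisymSummand v) := by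
  have hfull : ∏ j ∈ Ici 0, (Fin.cons a v : Fin (n + 1) → K) j = a * ∏ i, v i := by
    rw [← bot_eq_zero, Ici_bot, Fin.prod_cons]
  simp only [antisymSummand, Fin.prod_univ_succ, Fin.cons_zero, Fin.cons_succ, Fin.prod_Ici_succ,
    hfull, ← prod_mul_distrib]
  congr 1
  · simp
  · refine prod_congr rfl fun i _ => ?_
    rw [Fin.val_succ, Nat.add_sub_add_right, pow_succ]
    ring

theorem sum_sign_mul_antisymSummand_succ {n : ℕ} {z : Fin (n + 1) → K}
    (hz : Function.Injective z) (hprod : ∏ j, z j ≠ 1)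
    (ih : ∀ p, ∑ e : Perm (Fin n),
        (Perm.sign e : K) * antisymSummand (Fin.tail (z ∘ swap 0 p) ∘ e) =
      ∏ i, ∏ j ∈ Ioi i, (Fin.tail (z ∘ swap 0 p) j - Fin.tail (z ∘ swap 0 p) i)) :
    ∑ σ : Perm (Fin (n + 1)), (Perm.sign σ : K) * antisymSummand (z ∘ σ) =
      ∏ i, ∏ j ∈ Ioi i, (z j - z i) := by
  have hV : ∀ p, (Perm.sign (swap 0 p) : K) * (∏ j, Fin.tail (z ∘ swap 0 p) j) *
      ∏ i, ∏ j ∈ Ioi i, (Fin.tail (z ∘ swap 0 p) j - Fin.tail (z ∘ swap 0 p) i) =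
      (∏ i, ∏ j ∈ Ioi i, (z j - z i)) * ∏ j ∈ univ.erase p, z j / (z j - z p) := by
    intro p
    have hD : ∏ j ∈ univ.erase p, (z j - z p) ≠ 0 :=
      prod_ne_zero_iff.2 fun j hj => sub_ne_zero.2 (hz.ne (ne_of_mem_erase hj))
    rw [prod_div_distrib, prod_Ioi_sub_eq_sign_swap_mul z p, Fin.prod_tail_comp_swap_zero]
    field_simp
  set V := ∏ i, ∏ j ∈ Ioi i, (z j - z i)
  have hzp : ∀ p, z p * ∏ j, Fin.tail (z ∘ swap 0 p) j = ∏ j, z j := fun p => by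
    rw [Fin.prod_tail_comp_swap_zero, mul_prod_erase _ _ (mem_univ p)]
  calc ∑ σ : Perm (Fin (n + 1)), (Perm.sign σ : K) * antisymSummand (z ∘ σ)
      = ∑ p, ∑ e, (Perm.sign (Perm.decomposeFin.symm (p, e)) : K) *
          antisymSummand (z ∘ Perm.decomposeFin.symm (p, e)) :=
        (Perm.decomposeFin.symm.sum_comp _).symm.trans (Fintype.sum_prod_type _)
    _ = ∑ p, (1 - z p) ^ (n + 1) / (1 - ∏ j, z j) * ((Perm.sign (swap 0 p) : K) *
          (∏ j, Fin.tail (z ∘ swap 0 p) j) * ∑ e : Perm (Fin n),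
            (Perm.sign e : K) * antisymSummand (Fin.tail (z ∘ swap 0 p) ∘ e)) := by
      refine sum_congr rfl fun p _ => ?_
      have hsign : (if p = 0 then 1 else -1 : ℤˣ) = Perm.sign (swap 0 p) := by
        simp [Perm.sign_swap', eq_comm]
      simp only [mul_sum]
      refine sum_congr rfl fun e _ => ?_
      simp only [Perm.comp_decomposeFin_symm, antisymSummand_cons, Perm.decomposeFin.symm_sign,
        hsign, Function.comp_apply, Units.val_mul, Int.cast_mul]
      rw [Equiv.prod_comp e (Fin.tail (z ∘ swap 0 p)), hzp]
      ring
    _ = V / (1 - ∏ j, z j) *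
          ∑ p, (1 - z p) ^ (n + 1) * ∏ j ∈ univ.erase p, z j / (z j - z p) := by
      simp only [ih, hV, mul_sum]
      refine sum_congr rfl fun p _ => by ring
    _ = V := by
      rw [sum_one_sub_pow_mul_prod_div_eq_one_sub_prod hz,
        div_mul_cancel₀ _ (sub_ne_zero.2 hprod.symm)]

theorem sum_sign_mul_antisymSummand_comp {n : ℕ} {z : Fin n → K} (hz : Function.Injective z)
    (hden : ∀ (σ : Perm (Fin n)) (i : Fin n), ∏ j ∈ Ici i, z (σ j) ≠ 1) :
    ∑ σ : Perm (Fin n), (Perm.sign σ : K) * antisymSummand (z ∘ σ) =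
      ∏ i, ∏ j ∈ Ioi i, (z j - z i) := by
  induction n with
  | zero => simp [antisymSummand]
  | succ n ih =>
    refine sum_sign_mul_antisymSummand_succ hz ?_ fun p => ih ?_ fun e i => ?_
    · simpa [← bot_eq_zero] using hden 1 0
    · exact fun a b h => Fin.succ_injective n ((hz.comp (swap 0 p).injective) h)
    · simpa [Fin.prod_Ici_succ, Fin.tail] using hden (Perm.decomposeFin.symm (p, e)) i.succ

end Field

theorem stmt1_general (m : ℕ) (z : Fin m → ℂ)
    (hinj : Function.Injective z)
    (hden : ∀ (σ : Equiv.Perm (Fin m)) (i : Fin m),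
      (∏ j ∈ Finset.Ici i, z (σ j)) ≠ 1) :
    ∑ σ : Equiv.Perm (Fin m), ((Equiv.Perm.sign σ : ℤ) : ℂ) *
      ∏ i : Fin m, z (σ i) ^ (i : ℕ) * (1 - z (σ i)) ^ (m - (i : ℕ)) /
        (1 - ∏ j ∈ Finset.Ici i, z (σ j)) =
    ∏ i : Fin m, ∏ j ∈ Finset.Ioi i, (z j - z i) :=
  sum_sign_mul_antisymSummand_comp hinj hden

/-- Antisymmetrized sum equals the Vandermonde product. -/
theorem stmt1 (m : ℕ) (hm : 1 ≤ m) (z : Fin m → ℂ)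
    (hinj : Function.Injective z)
    (hden : ∀ (σ : Equiv.Perm (Fin m)) (i : Fin m),
      (∏ j ∈ Finset.Ici i, z (σ j)) ≠ 1) :
    ∑ σ : Equiv.Perm (Fin m), ((Equiv.Perm.sign σ : ℤ) : ℂ) *
      ∏ i : Fin m, z (σ i) ^ (i : ℕ) * (1 - z (σ i)) ^ (m - (i : ℕ)) /
        (1 - ∏ j ∈ Finset.Ici i, z (σ j)) =
    ∏ i : Fin m, ∏ j ∈ Finset.Ioi i, (z j - z i) :=
  stmt1_general m z hinj hden
end

section
/- For complex variables u_1,…,u_m (distinct, none equal to 1) and constants w_1,…,{m-1} (denoted z_{π_{n-m+1}},…,z_{π_{n-1}}), the polynomial g(u_1,…,u_m) = ∑_{σ∈S_m} sgn(σ) ∏_{j=1}^m (1-u_{σ_j})^{m-j} ∏_{k=1}^{j-1} (u_{σ_j} - w_k) equals ∏_{j=1}^{m-1}(w_j - 1)^{m-j} · ∏_{1≤i<j≤m}(u_i - u_j). -/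
/-!
The sum is the determinant of `M i j = p j (u i - 1)` with
`p j = (-X) ^ (m - 1 - j) * ∏_{k < j} (X - (w k - 1))`. Each `p j` has degree `< m` and is
divisible by `X ^ (m - 1 - j)`, so `M = V * T` with `V` the Vandermonde matrix of the `u i - 1`
in descending powers and `T` the upper triangular matrix of coefficients of the `p j`.
Hence `det M = ∏_{i < j} (u i - u j) * ∏_j (-1) ^ (m - 1) * ∏_{k < j} (w k - 1)`, and the signs
cancel because `m * (m - 1)` is even.
-/

open Finset Polynomial

theorem Fin.prod_Ioi_rev_rev {M : Type*} [CommMonoid M] {n : ℕ} (f : Fin n → Fin n → M) :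
    ∏ i : Fin n, ∏ j ∈ Ioi i, f (Fin.rev j) (Fin.rev i) = ∏ i, ∏ j ∈ Ioi i, f i j := by
  rw [Finset.prod_sigma', Finset.prod_sigma']
  refine Finset.prod_nbij' (fun p => ⟨Fin.rev p.2, Fin.rev p.1⟩)
    (fun p => ⟨Fin.rev p.2, Fin.rev p.1⟩) ?_ ?_ ?_ ?_ ?_ <;> simp

namespace Matrix

variable {R : Type*} [CommRing R] {n : ℕ}

theorem det_of_pow_sub_one_sub (v : Fin n → R) :
    (of fun i j : Fin n => v i ^ (n - 1 - (j : ℕ))).det = ∏ i, ∏ j ∈ Ioi i, (v i - v j) := by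
  have h : (of fun i j : Fin n => v i ^ (n - 1 - (j : ℕ))) =
      (vandermonde (v ∘ Fin.rev)).submatrix Fin.revPerm Fin.revPerm := by
    ext i j
    simp only [of_apply, submatrix_apply, vandermonde_apply, Function.comp_apply,
      Fin.revPerm_apply, Fin.rev_rev, Fin.val_rev]
    congr 1
    omega
  rw [h, det_submatrix_equiv_self, det_vandermonde]
  exact Fin.prod_Ioi_rev_rev fun i j => v i - v j

theorem of_eval_eq_of_pow_mul_of_coeff (v : Fin n → R) (p : Fin n → R[X])
    (h_deg : ∀ j, (p j).natDegree < n) :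
    of (fun i j => (p j).eval (v i)) =
      of (fun i t : Fin n => v i ^ (n - 1 - (t : ℕ))) *
        of (fun t j : Fin n => (p j).coeff (n - 1 - t)) := by
  ext i j
  rw [of_apply, mul_apply, eval_eq_sum_range' (h_deg j), ← Fin.sum_univ_eq_sum_range,
    ← Equiv.sum_comp Fin.revPerm]
  refine Finset.sum_congr rfl fun t _ => ?_
  simp only [of_apply, Fin.revPerm_apply, Fin.val_rev]
  rw [mul_comm]
  congr 2 <;> omega

theorem det_of_eval_of_X_pow_dvd (v : Fin n → R) (p : Fin n → R[X])
    (h_deg : ∀ j, (p j).natDegree < n) (h_dvd : ∀ j : Fin n, X ^ (n - 1 - (j : ℕ)) ∣ p j) :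
    (of fun i j => (p j).eval (v i)).det =
      (∏ i, ∏ j ∈ Ioi i, (v i - v j)) * ∏ j : Fin n, (p j).coeff (n - 1 - j) := by
  have h_tri : (of fun t j : Fin n => (p j).coeff (n - 1 - t)).BlockTriangular id :=
    fun t j (hjt : j < t) => X_pow_dvd_iff.mp (h_dvd j) _ (by omega)
  rw [of_eval_eq_of_pow_mul_of_coeff v p h_deg, det_mul, det_of_pow_sub_one_sub,
    det_of_isUpperTriangular h_tri]
  rfl

end Matrix

section ColumnPolynomial

variable {R : Type*} [CommRing R] {m : ℕ}

theorem Fin.card_filter_val_lt_val (j : Fin m) :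
    #{k : Fin (m - 1) | (k : ℕ) < j} = j := by
  rw [Fin.card_filter_val_lt]
  omega

theorem Fin.prod_prod_filter_val_lt (f : Fin (m - 1) → R) :
    ∏ j : Fin m, ∏ k ∈ univ.filter (fun k : Fin (m - 1) => (k : ℕ) < j), f k =
      ∏ k, f k ^ (m - 1 - (k : ℕ)) := by
  rw [Finset.prod_comm' (t' := univ)
    (s' := fun k : Fin (m - 1) => univ.filter fun j : Fin m => (k : ℕ) < j) (by simp)]
  refine Finset.prod_congr rfl fun k _ => ?_
  have h_Ioi : univ.filter (fun j : Fin m => (k : ℕ) < j) =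
      Ioi (Fin.castLE (Nat.sub_le m 1) k) := by
    ext j
    simp [Fin.lt_def]
  rw [h_Ioi, Finset.prod_const, Fin.card_Ioi]
  rfl

/-- Column `j` of the matrix of the theorem, as a polynomial in `u - 1`. -/
noncomputable def columnPoly (w : Fin (m - 1) → R) (j : Fin m) : R[X] :=
  (-X) ^ (m - 1 - (j : ℕ)) *
    ∏ k ∈ univ.filter (fun k : Fin (m - 1) => (k : ℕ) < j), (X - C (w k - 1))

variable (w : Fin (m - 1) → R)

theorem eval_sub_one_columnPoly (x : R) (j : Fin m) :
    (columnPoly w j).eval (x - 1) = (1 - x) ^ (m - 1 - (j : ℕ)) *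
      ∏ k ∈ univ.filter (fun k : Fin (m - 1) => (k : ℕ) < j), (x - w k) := by
  simp only [columnPoly, eval_mul, eval_pow, eval_neg, eval_X, eval_prod, eval_sub, eval_C,
    neg_sub, sub_sub_sub_cancel_right]

theorem natDegree_columnPoly_lt (j : Fin m) : (columnPoly w j).natDegree < m := by
  calc (columnPoly w j).natDegree
      ≤ (m - 1 - (j : ℕ)) * (-X : R[X]).natDegree +
          ∑ k ∈ univ.filter (fun k : Fin (m - 1) => (k : ℕ) < j), (X - C (w k - 1)).natDegree :=
        natDegree_mul_le.trans (add_le_add natDegree_pow_le (natDegree_prod_le _ _))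
    _ ≤ (m - 1 - (j : ℕ)) * 1 + ∑ k ∈ univ.filter (fun k : Fin (m - 1) => (k : ℕ) < j), 1 := by
        gcongr
        · rw [natDegree_neg]
          exact natDegree_X_le
        · exact natDegree_X_sub_C_le _
    _ < m := by
        rw [← card_eq_sum_ones, Fin.card_filter_val_lt_val]
        omega

theorem X_pow_dvd_columnPoly (j : Fin m) : X ^ (m - 1 - (j : ℕ)) ∣ columnPoly w j := by
  rw [columnPoly, neg_pow]
  exact dvd_mul_of_dvd_left (dvd_mul_left _ _) _

theorem coeff_columnPoly (j : Fin m) :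
    (columnPoly w j).coeff (m - 1 - j) =
      (-1) ^ (m - 1) * ∏ k ∈ univ.filter (fun k : Fin (m - 1) => (k : ℕ) < j), (w k - 1) := by
  rw [columnPoly, neg_pow, mul_assoc, ← C_1, ← C_neg, ← C_pow, coeff_C_mul, coeff_X_pow_mul',
    if_pos le_rfl, Nat.sub_self, coeff_zero_eq_eval_zero, eval_prod]
  simp only [eval_sub, eval_X, eval_C, zero_sub, prod_neg, Fin.card_filter_val_lt_val]
  rw [← mul_assoc, ← pow_add]
  congr 2
  omega

end ColumnPolynomial

theorem stmt2_general (m : ℕ) (u : Fin m → ℂ) (w : Fin (m - 1) → ℂ) :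
    ∑ σ : Equiv.Perm (Fin m), ((Equiv.Perm.sign σ : ℤ) : ℂ) *
      ∏ j : Fin m, (1 - u (σ j)) ^ (m - 1 - (j : ℕ)) *
        ∏ k ∈ Finset.univ.filter (fun k : Fin (m - 1) => (k : ℕ) < (j : ℕ)),
          (u (σ j) - w k) =
    (∏ k : Fin (m - 1), (w k - 1) ^ (m - 1 - (k : ℕ))) *
      ∏ i : Fin m, ∏ j ∈ Finset.Ioi i, (u i - u j) := by
  have h_det := Matrix.det_of_eval_of_X_pow_dvd (fun i => u i - 1) (columnPoly w)
    (natDegree_columnPoly_lt w) (X_pow_dvd_columnPoly w)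
  simp only [eval_sub_one_columnPoly, sub_sub_sub_cancel_right, coeff_columnPoly,
    prod_mul_distrib, prod_const, card_univ, Fintype.card_fin, Fin.prod_prod_filter_val_lt] at h_det
  have h_sign : ((-1 : ℂ) ^ (m - 1)) ^ m = 1 := by
    rw [← pow_mul, mul_comm]
    exact (Nat.even_mul_pred_self m).neg_one_pow
  rw [h_sign, one_mul, Matrix.det_apply'] at h_det
  simp only [Matrix.of_apply] at h_det
  rw [h_det, mul_comm]

/-- The antisymmetrized polynomial `g` factorizes as a product over the
constants times the Vandermonde product in the `u` variables. -/
theorem stmt2 (m : ℕ) (hm : 1 ≤ m) (u : Fin m → ℂ) (w : Fin (m - 1) → ℂ)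
    (hinj : Function.Injective u) (hu : ∀ i, u i ≠ 1) :
    ∑ σ : Equiv.Perm (Fin m), ((Equiv.Perm.sign σ : ℤ) : ℂ) *
      ∏ j : Fin m, (1 - u (σ j)) ^ (m - 1 - (j : ℕ)) *
        ∏ k ∈ Finset.univ.filter (fun k : Fin (m - 1) => (k : ℕ) < (j : ℕ)),
          (u (σ j) - w k) =
    (∏ k : Fin (m - 1), (w k - 1) ^ (m - 1 - (k : ℕ))) *
      ∏ i : Fin m, ∏ j ∈ Finset.Ioi i, (u i - u j) :=
  stmt2_general m u w
end

section
/- At q = 0, the symmetrized Hall–Littlewood-type sum F_λ(u_1,…,u_N) = ∑_{σ∈S_N} ∏_{1≤i<j≤N} (u_{σ_j} - q u_{σ_i})/(u_{σ_j} - u_{σ_i}) ∏_{i=1}^N ((1-u_{σ_i})/(1-q u_{σ_i}))^{λ_i} equals the ratio of determinants: F_λ(u_1,…,u_N; q=0) = det[ u_j^{i-1} (1-u_j)^{λ_i} ]_{1≤i,j≤N} / ∏_{1≤i<j≤N}(u_j - u_i). -/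
open scoped BigOperators

/-! At `q = 0` the factor `u_{σ j} / (u_{σ j} - u_{σ i})` splits: the numerators give the monomial
`∏ j, u_{σ j} ^ j`, and the denominators form the Vandermonde product of `u ∘ σ`, which is
`sign σ` times that of `u`. Since `sign σ = ±1` is its own inverse, the sum over `σ` becomes the
Leibniz expansion of the determinant divided by the Vandermonde product. -/

theorem Fin.prod_prod_Ioi_eq_prod_pow {M : Type*} [CommMonoid M] {n : ℕ} (f : Fin n → M) :
    ∏ i : Fin n, ∏ j ∈ Finset.Ioi i, f j = ∏ j : Fin n, f j ^ (j : ℕ) := by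
  rw [Finset.prod_comm' (t' := Finset.univ) (s' := fun j => Finset.Iio j)
    (by simp [Finset.mem_Ioi, Finset.mem_Iio])]
  exact Finset.prod_congr rfl fun j _ => by rw [Finset.prod_const, Fin.card_Iio]

theorem Matrix.det_vandermonde_comp_perm {R : Type*} [CommRing R] {n : ℕ} (v : Fin n → R)
    (σ : Equiv.Perm (Fin n)) :
    (vandermonde (v ∘ σ)).det = Equiv.Perm.sign σ * (vandermonde v).det := by
  rw [show vandermonde (v ∘ σ) = (vandermonde v).submatrix σ id from rfl, det_permute]

theorem prod_Ioi_div_sub_comp_perm {K : Type*} [Field K] {n : ℕ} (v : Fin n → K)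
    (σ : Equiv.Perm (Fin n)) :
    ∏ i : Fin n, ∏ j ∈ Finset.Ioi i, v (σ j) / (v (σ j) - v (σ i)) =
      Equiv.Perm.sign σ * (∏ j : Fin n, v (σ j) ^ (j : ℕ)) /
        ∏ i : Fin n, ∏ j ∈ Finset.Ioi i, (v j - v i) := by
  have hden : ∏ i : Fin n, ∏ j ∈ Finset.Ioi i, (v (σ j) - v (σ i)) =
      Equiv.Perm.sign σ * ∏ i : Fin n, ∏ j ∈ Finset.Ioi i, (v j - v i) := by
    simpa only [Matrix.det_vandermonde, Function.comp_apply] using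
      Matrix.det_vandermonde_comp_perm v σ
  simp only [Finset.prod_div_distrib]
  rw [Fin.prod_prod_Ioi_eq_prod_pow (fun j => v (σ j)), hden]
  rcases Int.units_eq_one_or (Equiv.Perm.sign σ) with h | h <;> simp [h, div_neg, neg_div]

theorem stmt4_general (N : ℕ) (lam : Fin N → ℤ) (u : Fin N → ℂ) :
    ∑ σ : Equiv.Perm (Fin N),
      (∏ i : Fin N, ∏ j ∈ Finset.Ioi i, u (σ j) / (u (σ j) - u (σ i))) *
      ∏ i : Fin N, (1 - u (σ i)) ^ (lam i) =
    Matrix.det (Matrix.of fun i j : Fin N => u j ^ (i : ℕ) * (1 - u j) ^ (lam i)) /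
      ∏ i : Fin N, ∏ j ∈ Finset.Ioi i, (u j - u i) := by
  rw [← Matrix.det_transpose, Matrix.det_apply', Finset.sum_div]
  refine Finset.sum_congr rfl fun σ _ => ?_
  simp only [prod_Ioi_div_sub_comp_perm, Matrix.transpose_apply, Matrix.of_apply,
    Finset.prod_mul_distrib]
  ring

/-- At `q = 0` the Hall–Littlewood-type symmetrization `F_λ` equals a ratio of
a determinant and the Vandermonde product. -/
theorem stmt4 (N : ℕ) (hN : 1 ≤ N) (lam : Fin N → ℤ) (u : Fin N → ℂ)
    (hinj : Function.Injective u) (hu : ∀ i, u i ≠ 1) :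
    ∑ σ : Equiv.Perm (Fin N),
      (∏ i : Fin N, ∏ j ∈ Finset.Ioi i, u (σ j) / (u (σ j) - u (σ i))) *
      ∏ i : Fin N, (1 - u (σ i)) ^ (lam i) =
    Matrix.det (Matrix.of fun i j : Fin N => u j ^ (i : ℕ) * (1 - u j) ^ (lam i)) /
      ∏ i : Fin N, ∏ j ∈ Finset.Ioi i, (u j - u i) :=
  stmt4_general N lam u
end

section
/- For complex z_1,…,z_m with z_i ≠ 1 and ρ ∈ ℂ such that all denominators 1-(1-ρ)∏_{j=1}^i z_{σ_j} (for σ∈S_m, 1≤i≤m) are nonzero: ∑_{σ∈S_m} sgn(σ) ∏_{i=1}^m [ ((1-z_{σ_i})/z_{σ_i})^i · 1/(1 - (1-ρ)∏_{j=1}^i z_{σ_j}) ] = ∏_{1≤i<j≤m}(z_i - z_j) · ∏_{i=1}^m (1-z_i)/( z_i^m (1-(1-ρ)z_i) ). -/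
open scoped BigOperators

open Finset Equiv Polynomial

/-! ### Permutation decomposition by the image of `last` -/

/-- The permutation of `Fin (n+1)` sending `last` to `k` and `castSucc j` to
`succAbove k (π j)`. -/
def permE {n : ℕ} (k : Fin (n+1)) (π : Perm (Fin n)) : Perm (Fin (n+1)) :=
  finSuccEquivLast.trans ((Equiv.optionCongr π).trans (finSuccEquiv' k).symm)

@[simp] lemma permE_last {n : ℕ} (k : Fin (n+1)) (π : Perm (Fin n)) :
    permE k π (Fin.last n) = k := by
  simp [permE]

@[simp] lemma permE_castSucc {n : ℕ} (k : Fin (n+1)) (π : Perm (Fin n)) (j : Fin n) :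
    permE k π (Fin.castSucc j) = k.succAbove (π j) := by
  simp [permE]

lemma permE_bijective {n : ℕ} :
    Function.Bijective (fun p : Fin (n+1) × Perm (Fin n) => permE p.1 p.2) := by
  rw [Fintype.bijective_iff_injective_and_card]
  constructor
  · rintro ⟨k, π⟩ ⟨k', π'⟩ h
    simp only at h
    have hk : k = k' := by
      have := congrArg (fun σ : Perm (Fin (n+1)) => σ (Fin.last n)) h
      simpa using this
    subst hk
    have hπ : π = π' := by
      apply Equiv.ext; intro j
      have := congrArg (fun σ : Perm (Fin (n+1)) => σ (Fin.castSucc j)) h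
      simp only [permE_castSucc] at this
      exact Fin.succAbove_right_injective this
    simp [hπ]
  · simp [Fintype.card_perm, Nat.factorial_succ]

lemma permE_last_mul {n : ℕ} (π π' : Perm (Fin n)) :
    permE (Fin.last n) (π * π') = permE (Fin.last n) π * permE (Fin.last n) π' := by
  apply Equiv.ext; intro x
  induction x using Fin.lastCases with
  | last => simp
  | cast j => simp [Fin.succAbove_last]

lemma permE_last_swap {n : ℕ} (x y : Fin n) :
    permE (Fin.last n) (Equiv.swap x y) = Equiv.swap (Fin.castSucc x) (Fin.castSucc y) := by
  apply Equiv.ext; intro a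
  induction a using Fin.lastCases with
  | last =>
    simp only [permE_last]
    rw [Equiv.swap_apply_of_ne_of_ne (Fin.castSucc_lt_last x).ne' (Fin.castSucc_lt_last y).ne']
  | cast j => simp [Fin.succAbove_last, Fin.castSucc_injective n |>.swap_apply]

lemma sign_permE_last {n : ℕ} (π : Perm (Fin n)) :
    Equiv.Perm.sign (permE (Fin.last n) π) = Equiv.Perm.sign π := by
  refine Equiv.Perm.swap_induction_on π ?_ ?_
  ·
    have : permE (Fin.last n) (1 : Perm (Fin n)) = 1 := by
      apply Equiv.ext; intro x
      induction x using Fin.lastCases with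
      | last => simp
      | cast j => simp [Fin.succAbove_last]
    simp [this]
  · intro f x y hxy ih
    rw [permE_last_mul, map_mul, permE_last_swap, ih, map_mul,
      Equiv.Perm.sign_swap hxy, Equiv.Perm.sign_swap (by simpa using hxy)]

lemma permE_castSucc_one {n : ℕ} (i : Fin n) :
    permE (Fin.castSucc i) (1 : Perm (Fin n)) =
      Equiv.swap (Fin.castSucc i) i.succ * permE i.succ (1 : Perm (Fin n)) := by
  apply Equiv.ext; intro a
  induction a using Fin.lastCases with
  | last => simp [Equiv.swap_apply_right]
  | cast j =>
    simp only [permE_castSucc, Equiv.Perm.mul_apply, Perm.one_apply]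
    rcases lt_trichotomy (j : ℕ) (i : ℕ) with h | h | h
    · rw [Fin.succAbove_of_castSucc_lt _ _ (Fin.castSucc_lt_castSucc_iff.mpr h),
        Fin.succAbove_of_castSucc_lt _ _ (Fin.castSucc_lt_succ_iff.mpr (le_of_lt h)),
        Equiv.swap_apply_of_ne_of_ne]
      · exact Fin.ne_of_val_ne (by simp; omega)
      · exact Fin.ne_of_val_ne (by simp; omega)
    · have : j = i := Fin.ext h
      subst this
      rw [Fin.succAbove_of_le_castSucc _ _ (le_refl _),
        Fin.succAbove_of_castSucc_lt _ _ (Fin.castSucc_lt_succ : Fin.castSucc j < j.succ),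
        Equiv.swap_apply_left]
    · rw [Fin.succAbove_of_le_castSucc _ _ (Fin.castSucc_le_castSucc_iff.mpr (le_of_lt h)),
        Fin.succAbove_of_le_castSucc _ _ (Fin.succ_le_castSucc_iff.mpr h),
        Equiv.swap_apply_of_ne_of_ne]
      · exact Fin.ne_of_val_ne (by simp; omega)
      · exact Fin.ne_of_val_ne (by simp; omega)

lemma sign_permE_one {n : ℕ} (k : Fin (n+1)) :
    Equiv.Perm.sign (permE k (1 : Perm (Fin n))) = (-1) ^ (n - (k : ℕ)) := by
  induction k using Fin.reverseInduction with
  | last =>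
    rw [show permE (Fin.last n) (1 : Perm (Fin n)) = 1 from ?_]
    · simp
    · apply Equiv.ext; intro x
      induction x using Fin.lastCases with
      | last => simp
      | cast j => simp [Fin.succAbove_last]
  | cast i ih =>
    rw [permE_castSucc_one, map_mul, ih, Equiv.Perm.sign_swap (Fin.castSucc_lt_succ : Fin.castSucc i < i.succ).ne]
    have h1 : (i : ℕ) < n := i.isLt
    have : n - (Fin.castSucc i : ℕ) = (n - (i.succ : ℕ)) + 1 := by simp; omega
    rw [show ((Fin.castSucc i : Fin (n+1)) : ℕ) = (i : ℕ) from rfl] at *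
    rw [this, pow_succ, mul_comm]

lemma permE_eq_mul {n : ℕ} (k : Fin (n+1)) (π : Perm (Fin n)) :
    permE k π = permE k (1 : Perm (Fin n)) * permE (Fin.last n) π := by
  apply Equiv.ext; intro a
  induction a using Fin.lastCases with
  | last => simp
  | cast j => simp [Fin.succAbove_last]

lemma sign_permE {n : ℕ} (k : Fin (n+1)) (π : Perm (Fin n)) :
    Equiv.Perm.sign (permE k π) = (-1) ^ (n - (k : ℕ)) * Equiv.Perm.sign π := by
  rw [permE_eq_mul, map_mul, sign_permE_one, sign_permE_last]

/-! ### A Lagrange-interpolation identity -/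

lemma leadingCoeff_basisDivisor {F : Type*} [Field F] {a b : F} :
    (Lagrange.basisDivisor a b).leadingCoeff = (a - b)⁻¹ := by
  rw [Lagrange.basisDivisor, leadingCoeff_mul, leadingCoeff_C, leadingCoeff_X_sub_C, mul_one]

lemma lagrange_coeff_top {F : Type*} [Field F] {ι : Type*} [DecidableEq ι] (s : Finset ι)
    (v : ι → F) (hvs : Set.InjOn v s) (f : F[X]) (hdeg : f.degree < s.card) :
    f.coeff (s.card - 1) = ∑ i ∈ s, f.eval (v i) * ∏ j ∈ s.erase i, (v i - v j)⁻¹ := by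
  conv_lhs => rw [Lagrange.eq_interpolate hvs hdeg]
  rw [Lagrange.interpolate_apply, Polynomial.finset_sum_coeff]
  refine Finset.sum_congr rfl fun i hi => ?_
  rw [Polynomial.coeff_C_mul]
  congr 1
  rw [← Lagrange.natDegree_basis hvs hi, Polynomial.coeff_natDegree, Lagrange.basis,
    Polynomial.leadingCoeff_prod]
  exact Finset.prod_congr rfl fun j hj => leadingCoeff_basisDivisor

lemma erase_univ_none {M : ℕ} :
    (Finset.univ : Finset (Option (Fin M))).erase none = Finset.univ.map Function.Embedding.some := by
  ext o; cases o <;> simp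

lemma erase_univ_some {M : ℕ} (k : Fin M) :
    (Finset.univ : Finset (Option (Fin M))).erase (some k) =
      Finset.insertNone (Finset.univ.erase k) := by
  ext o; cases o <;> simp [eq_comm]

lemma lagrange_key (n : ℕ) (t : ℂ) (z : Fin (n+1) → ℂ) (hz0 : ∀ k, z k ≠ 0)
    (hinj : Function.Injective z) :
    ∑ k : Fin (n+1), (1 - z k)^n * (1 - t * z k) * (∏ i ∈ Finset.univ.erase k, z i) *
      (∏ j ∈ Finset.univ.erase k, (z k - z j))⁻¹
      = (-1 : ℂ)^n * (1 - t * ∏ i, z i) := by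
  classical
  set v : Option (Fin (n+1)) → ℂ := fun o => Option.elim o 0 z with hv
  have hvnone : v none = 0 := rfl
  have hvsome : ∀ k, v (some k) = z k := fun k => rfl
  have hvinj : Function.Injective v := by
    rintro (_ | a) (_ | b) h <;> simp only [hvnone, hvsome] at h
    · rfl
    · exact absurd h.symm (hz0 b)
    · exact absurd h (hz0 a)
    · rw [hinj h]
  set f : Polynomial ℂ := (1 - Polynomial.X)^n * (1 - Polynomial.C t * Polynomial.X) with hf
  have hcard : (Finset.univ : Finset (Option (Fin (n+1)))).card = n + 2 := by
    simp [Fintype.card_option]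
  have hdeg : f.degree < ((Finset.univ : Finset (Option (Fin (n+1)))).card : ℕ) := by
    rw [hcard]
    refine lt_of_le_of_lt f.degree_le_natDegree ?_
    have h1 : f.natDegree ≤ n + 1 := by
      refine Polynomial.natDegree_mul_le.trans (add_le_add ?_ ?_)
      · refine (Polynomial.natDegree_pow_le).trans ?_
        have : (1 - Polynomial.X : Polynomial ℂ).natDegree ≤ 1 :=
          (Polynomial.natDegree_sub_le _ _).trans (by simp)
        calc n * (1 - Polynomial.X : Polynomial ℂ).natDegree ≤ n * 1 := Nat.mul_le_mul_left n this
          _ = n := by ring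
      · refine (Polynomial.natDegree_sub_le _ _).trans ?_
        have : (Polynomial.C t * Polynomial.X).natDegree ≤ 1 :=
          (Polynomial.natDegree_C_mul_le t Polynomial.X).trans (by simp)
        simp [this]
    exact_mod_cast lt_of_le_of_lt (Nat.cast_le.mpr h1) (by exact_mod_cast Nat.lt_succ_self (n+1))
  have key := lagrange_coeff_top Finset.univ v (Function.Injective.injOn hvinj) f hdeg
  rw [hcard] at key
  have hgnd : ((1 - Polynomial.X : Polynomial ℂ)^n).natDegree ≤ n := by
    refine (Polynomial.natDegree_pow_le).trans ?_
    have : (1 - Polynomial.X : Polynomial ℂ).natDegree ≤ 1 :=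
      (Polynomial.natDegree_sub_le _ _).trans (by simp)
    calc n * (1 - Polynomial.X : Polynomial ℂ).natDegree ≤ n * 1 := Nat.mul_le_mul_left n this
      _ = n := by ring
  have hg1 : ((1 - Polynomial.X : Polynomial ℂ)^n).coeff (n+1) = 0 :=
    Polynomial.coeff_eq_zero_of_natDegree_lt (lt_of_le_of_lt hgnd (Nat.lt_succ_self n))
  have hg2 : ((1 - Polynomial.X : Polynomial ℂ)^n).coeff n = (-1)^n := by
    have e1 : (1 - Polynomial.X : Polynomial ℂ) = -(Polynomial.X - Polynomial.C 1) := by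
      rw [Polynomial.C_1]; ring
    rw [e1, neg_pow]
    have e2 : ((-1 : Polynomial ℂ))^n * (Polynomial.X - Polynomial.C 1)^n
        = Polynomial.C ((-1 : ℂ)^n) * (Polynomial.X - Polynomial.C 1)^n := by
      simp
    have hm : ((Polynomial.X - Polynomial.C (1:ℂ))^n).Monic := (Polynomial.monic_X_sub_C 1).pow n
    have hnd : ((Polynomial.X - Polynomial.C (1:ℂ))^n).natDegree = n := by
      rw [Polynomial.natDegree_pow, Polynomial.natDegree_X_sub_C, mul_one]
    have h3 : ((Polynomial.X - Polynomial.C (1:ℂ))^n).coeff n = 1 := by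
      have h4 := hm.coeff_natDegree
      rwa [hnd] at h4
    rw [e2, Polynomial.coeff_C_mul, h3, mul_one]
  have hcoeff : f.coeff (n+1) = -t * (-1)^n := by
    have : f = (1 - Polynomial.X)^n - Polynomial.C t * ((1 - Polynomial.X)^n * Polynomial.X) := by
      rw [hf]; ring
    rw [this, Polynomial.coeff_sub, Polynomial.coeff_C_mul, Polynomial.coeff_mul_X, hg1, hg2]
    ring
  rw [show (n + 2 - 1 : ℕ) = n + 1 from rfl, hcoeff] at key
  rw [Finset.sum_eq_add_sum_sdiff_singleton_of_mem (Finset.mem_univ (none : Option (Fin (n+1)))),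
    show Finset.univ \ {(none : Option (Fin (n+1)))} = Finset.univ.erase none by
      rw [Finset.erase_eq]] at key
  have key2 : -t * (-1:ℂ)^n = (∏ k : Fin (n+1), (0 - z k)⁻¹) +
      ∑ k : Fin (n+1), ((1 - z k)^n * (1 - t * z k)) *
        ((z k)⁻¹ * ∏ j ∈ Finset.univ.erase k, (z k - z j)⁻¹) := by
    rw [key, erase_univ_none, Finset.sum_map, Finset.prod_map]
    congr 1
    · rw [show Polynomial.eval (v none) f = 1 by simp [hf, hvnone], one_mul]
      refine Finset.prod_congr rfl fun j _ => ?_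
      simp [hvnone, hvsome]
    · refine Finset.sum_congr rfl fun k _ => ?_
      rw [show (Function.Embedding.some k : Option (Fin (n+1))) = some k from rfl]
      rw [erase_univ_some, Finset.prod_insertNone]
      rw [show Polynomial.eval (v (some k)) f = (1 - z k)^n * (1 - t * z k) by
        simp [hf, hvsome]]
      congr 1
      rw [show v (some k) - v none = z k - 0 from rfl, sub_zero]
      refine congrArg _ (Finset.prod_congr rfl fun j _ => ?_)
      rfl
  set Z := ∏ i : Fin (n+1), z i with hZ
  have hPk : ∀ k, z k * ∏ i ∈ Finset.univ.erase k, z i = Z :=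
    fun k => Finset.mul_prod_erase _ _ (Finset.mem_univ k)
  have step : ∀ k : Fin (n+1), (1 - z k)^n * (1 - t * z k) * (∏ i ∈ Finset.univ.erase k, z i) *
      (∏ j ∈ Finset.univ.erase k, (z k - z j))⁻¹ =
      Z * (((1 - z k)^n * (1 - t * z k)) *
        ((z k)⁻¹ * ∏ j ∈ Finset.univ.erase k, (z k - z j)⁻¹)) := by
    intro k
    rw [Finset.prod_inv_distrib, ← hPk k,
      show z k * (∏ i ∈ Finset.univ.erase k, z i) *
          (((1 - z k)^n * (1 - t * z k)) *
            ((z k)⁻¹ * (∏ j ∈ Finset.univ.erase k, (z k - z j))⁻¹)) =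
          (z k * (z k)⁻¹) * ((1 - z k)^n * (1 - t * z k) * (∏ i ∈ Finset.univ.erase k, z i) *
            (∏ j ∈ Finset.univ.erase k, (z k - z j))⁻¹) from by ring,
      mul_inv_cancel₀ (hz0 k), one_mul]
  rw [Finset.sum_congr rfl (fun k _ => step k), ← Finset.mul_sum]
  have hsum : ∑ k : Fin (n+1), ((1 - z k)^n * (1 - t * z k)) *
      ((z k)⁻¹ * ∏ j ∈ Finset.univ.erase k, (z k - z j)⁻¹)
      = -t * (-1:ℂ)^n - ∏ k : Fin (n+1), (0 - z k)⁻¹ := by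
    rw [key2]; ring
  rw [hsum, mul_sub]
  have hZA : Z * ∏ k : Fin (n+1), (0 - z k)⁻¹ = (-1:ℂ)^(n+1) := by
    rw [hZ, ← Finset.prod_mul_distrib]
    rw [Finset.prod_congr rfl (fun k _ => show z k * (0 - z k)⁻¹ = -1 by
      have h0 : z k ≠ 0 := hz0 k
      field_simp
      ring)]
    simp
  rw [hZA, pow_succ]
  ring

/-! ### Splitting the Vandermonde-type double product -/

lemma Ioi_succAbove {n : ℕ} (k : Fin (n+1)) (i : Fin n) :
    Finset.Ioi (k.succAbove i) =
      if Fin.castSucc i < k then insert k ((Finset.Ioi i).map (Fin.succAboveEmb k))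
      else (Finset.Ioi i).map (Fin.succAboveEmb k) := by
  ext x
  rw [Finset.mem_Ioi]
  have hmem : ∀ S : Finset (Fin n), x ∈ S.map (Fin.succAboveEmb k) ↔
      ∃ j ∈ S, k.succAbove j = x := by
    intro S; simp only [Finset.mem_map, Fin.coe_succAboveEmb]
  split_ifs with h
  · rw [Finset.mem_insert, hmem]
    by_cases hx : x = k
    · subst hx
      simp only [true_or, iff_true]
      rwa [Fin.succAbove_of_castSucc_lt _ _ h]
    · obtain ⟨j, rfl⟩ := Fin.exists_succAbove_eq hx
      simp only [(Fin.succAbove_ne k j : k.succAbove j ≠ k), false_or]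
      constructor
      · intro hlt
        exact ⟨j, Finset.mem_Ioi.mpr (Fin.succAbove_lt_succAbove_iff.mp hlt), rfl⟩
      · rintro ⟨j', hj', he⟩
        have : j' = j := Fin.succAbove_right_injective he
        subst this
        exact Fin.succAbove_lt_succAbove_iff.mpr (Finset.mem_Ioi.mp hj')
  · rw [hmem]
    push_neg at h
    by_cases hx : x = k
    · rw [hx, Fin.succAbove_of_le_castSucc _ _ h]
      constructor
      · intro hlt
        exact absurd (h.trans_lt (Fin.castSucc_lt_succ : Fin.castSucc i < i.succ)) (not_lt.mpr hlt.le)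
      · rintro ⟨j, hj, hjx⟩
        exact absurd hjx (Fin.succAbove_ne k j)
    · obtain ⟨j, rfl⟩ := Fin.exists_succAbove_eq hx
      constructor
      · intro hlt
        exact ⟨j, Finset.mem_Ioi.mpr (Fin.succAbove_lt_succAbove_iff.mp hlt), rfl⟩
      · rintro ⟨j', hj', he⟩
        have : j' = j := Fin.succAbove_right_injective he
        subst this
        exact Fin.succAbove_lt_succAbove_iff.mpr (Finset.mem_Ioi.mp hj')

lemma erase_eq_Iio_union_Ioi {n : ℕ} (k : Fin n) :
    Finset.univ.erase k = Finset.Iio k ∪ Finset.Ioi k := by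
  ext x
  simp only [Finset.mem_erase, Finset.mem_univ, and_true, Finset.mem_union, Finset.mem_Iio,
    Finset.mem_Ioi]
  exact ne_iff_lt_or_gt

lemma castSucc_filter_map {n : ℕ} (k : Fin (n+1)) :
    (Finset.univ.filter fun i : Fin n => Fin.castSucc i < k).map
      ⟨Fin.castSucc, Fin.castSucc_injective n⟩ = Finset.Iio k := by
  ext x
  simp only [Finset.mem_map, Finset.mem_filter, Finset.mem_univ, true_and,
    Function.Embedding.coeFn_mk, Finset.mem_Iio]
  constructor
  · rintro ⟨i, hi, rfl⟩; exact hi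
  · intro hx
    have hxl : x ≠ Fin.last n := fun h => absurd (h ▸ hx) (not_lt.mpr (Fin.le_last k))
    obtain ⟨i, rfl⟩ := Fin.exists_castSucc_eq.mpr hxl
    exact ⟨i, hx, rfl⟩

lemma Dsplit {n : ℕ} (f : Fin (n+1) → ℂ) (k : Fin (n+1)) :
    ∏ i : Fin (n+1), ∏ j ∈ Finset.Ioi i, (f i - f j) =
      ((-1 : ℂ)^(k:ℕ) * ∏ j ∈ Finset.univ.erase k, (f k - f j)) *
      ∏ i : Fin n, ∏ j ∈ Finset.Ioi i, (f (k.succAbove i) - f (k.succAbove j)) := by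
  rw [Fin.prod_univ_succAbove (fun i => ∏ j ∈ Finset.Ioi i, (f i - f j)) k]
  have per : ∀ i : Fin n, (∏ j ∈ Finset.Ioi (k.succAbove i), (f (k.succAbove i) - f j)) =
      (if Fin.castSucc i < k then (f (Fin.castSucc i) - f k) else 1) *
        ∏ j ∈ Finset.Ioi i, (f (k.succAbove i) - f (k.succAbove j)) := by
    intro i
    rw [Ioi_succAbove]
    split_ifs with h
    · rw [Finset.prod_insert (by
        simp only [Finset.mem_map, Fin.coe_succAboveEmb, not_exists]
        rintro j ⟨_, hj⟩
        exact Fin.succAbove_ne k j hj), Finset.prod_map,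
        Fin.succAbove_of_castSucc_lt _ _ h]
      rfl
    · rw [Finset.prod_map, one_mul]; rfl
  rw [Finset.prod_congr rfl (fun i _ => per i), Finset.prod_mul_distrib, ← Finset.prod_filter]
  rw [show (∏ a ∈ Finset.univ.filter (fun a : Fin n => Fin.castSucc a < k),
      (f a.castSucc - f k)) = ∏ x ∈ Finset.Iio k, (f x - f k) by
    rw [← castSucc_filter_map k, Finset.prod_map]; rfl]
  have neg1 : ∏ x ∈ Finset.Iio k, (f x - f k) =
      (-1 : ℂ)^(k:ℕ) * ∏ x ∈ Finset.Iio k, (f k - f x) := by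
    rw [Finset.prod_congr rfl (fun x _ => show f x - f k = -1 * (f k - f x) by ring),
      Finset.prod_mul_distrib, Finset.prod_const, Fin.card_Iio]
  rw [neg1, erase_eq_Iio_union_Ioi,
    Finset.prod_union (Finset.disjoint_left.mpr fun x hx hx' =>
      lt_asymm (Finset.mem_Iio.mp hx) (Finset.mem_Ioi.mp hx'))]
  ring

/-! ### Small `Fin`/`Finset` helpers -/

lemma Iic_last_univ {n : ℕ} : Finset.Iic (Fin.last n) = Finset.univ := by
  ext x; simp [Fin.le_last]

lemma Iic_castSucc_map {n : ℕ} (j : Fin n) : Finset.Iic (Fin.castSucc j) =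
    (Finset.Iic j).map ⟨Fin.castSucc, Fin.castSucc_injective n⟩ := by
  ext x
  simp only [Finset.mem_Iic, Finset.mem_map, Function.Embedding.coeFn_mk]
  constructor
  · intro hx
    have hxl : x ≠ Fin.last n := fun h =>
      absurd (h ▸ hx) (not_le.mpr (Fin.castSucc_lt_last j))
    obtain ⟨i, rfl⟩ := Fin.exists_castSucc_eq.mpr hxl
    exact ⟨i, Fin.castSucc_le_castSucc_iff.mp hx, rfl⟩
  · rintro ⟨i, hi, rfl⟩
    exact Fin.castSucc_le_castSucc_iff.mpr hi

/-! ### The main identity, by induction on the number of variables -/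

theorem aux_identity (m : ℕ) : ∀ (t : ℂ) (z : Fin m → ℂ), (∀ i, z i ≠ 0) →
    (∀ S : Finset (Fin m), S.Nonempty → t * ∏ i ∈ S, z i ≠ 1) →
    ((∑ σ : Equiv.Perm (Fin m), ((Equiv.Perm.sign σ : ℤ) : ℂ) *
      ∏ i : Fin m, ((1 - z (σ i)) / z (σ i)) ^ ((i : ℕ) + 1) *
        (1 - t * ∏ j ∈ Finset.Iic i, z (σ j))⁻¹) =
    (∏ i : Fin m, ∏ j ∈ Finset.Ioi i, (z i - z j)) *
      ∏ i : Fin m, (1 - z i) / (z i ^ m * (1 - t * z i))) := by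
  induction m with
  | zero =>
    intro t z _ _
    rw [Fintype.sum_eq_single (1 : Perm (Fin 0))
      (fun σ hσ => absurd (Equiv.ext fun x => x.elim0) hσ)]
    simp
  | succ n ih =>
    intro t z hz0 hS
    by_cases hinj : Function.Injective z
    · set Z := ∏ i : Fin (n+1), z i with hZ
      have hZ0 : Z ≠ 0 := Finset.prod_ne_zero_iff.mpr fun i _ => hz0 i
      have htZ : 1 - t * Z ≠ 0 := sub_ne_zero.mpr (Ne.symm (by
        rw [hZ]; exact hS Finset.univ Finset.univ_nonempty))
      have h1tz : ∀ i, 1 - t * z i ≠ 0 := fun i => sub_ne_zero.mpr (Ne.symm (by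
        simpa using hS {i} (Finset.singleton_nonempty i)))
      set F : Perm (Fin (n+1)) → ℂ := fun σ => ((Equiv.Perm.sign σ : ℤ) : ℂ) *
        ∏ i : Fin (n+1), ((1 - z (σ i)) / z (σ i)) ^ ((i : ℕ) + 1) *
          (1 - t * ∏ j ∈ Finset.Iic i, z (σ j))⁻¹ with hF
      have hsgn : ∀ (k : Fin (n+1)) (π : Perm (Fin n)),
          ((Equiv.Perm.sign (permE k π) : ℤ) : ℂ)
            = (-1 : ℂ)^(n - (k:ℕ)) * ((Equiv.Perm.sign π : ℤ) : ℂ) := by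
        intro k π
        rw [sign_permE]
        push_cast
        ring
      have hFval : ∀ (k : Fin (n+1)) (π : Perm (Fin n)), F (permE k π) =
          ((-1 : ℂ)^(n - (k:ℕ)) * (((1 - z k) / z k)^(n+1) * (1 - t * Z)⁻¹)) *
          (((Equiv.Perm.sign π : ℤ) : ℂ) *
            ∏ i : Fin n, ((1 - z (k.succAbove (π i))) / z (k.succAbove (π i))) ^ ((i : ℕ) + 1) *
              (1 - t * ∏ j ∈ Finset.Iic i, z (k.succAbove (π j)))⁻¹) := by
        intro k π
        simp only [hF]
        rw [hsgn k π]
        simp only [Fin.prod_univ_castSucc, permE_last, permE_castSucc, Fin.val_last,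
          Fin.coe_castSucc, Iic_last_univ, Iic_castSucc_map, Finset.prod_map,
          Function.Embedding.coeFn_mk]
        have hZfac : (∏ x : Fin n, z (k.succAbove (π x))) * z k = Z := by
          rw [Equiv.prod_comp π (fun i => z (k.succAbove i)), hZ,
            Fin.prod_univ_succAbove z k]
          ring
        rw [hZfac]
        ring
      have hA : (∑ σ : Perm (Fin (n+1)), F σ)
          = ∑ p : Fin (n+1) × Perm (Fin n), F (permE p.1 p.2) :=
        (Fintype.sum_bijective _ (permE_bijective (n := n))
          (fun p => F (permE p.1 p.2)) F (fun p => rfl)).symm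
      rw [hA]
      simp only [Fintype.sum_prod_type]
      have hIH : ∀ k : Fin (n+1),
          (∑ π : Perm (Fin n), ((Equiv.Perm.sign π : ℤ) : ℂ) *
            ∏ i : Fin n, ((1 - z (k.succAbove (π i))) / z (k.succAbove (π i))) ^ ((i : ℕ) + 1) *
              (1 - t * ∏ j ∈ Finset.Iic i, z (k.succAbove (π j)))⁻¹)
          = (∏ i : Fin n, ∏ j ∈ Finset.Ioi i, (z (k.succAbove i) - z (k.succAbove j))) *
            ∏ i : Fin n, (1 - z (k.succAbove i)) /
              (z (k.succAbove i) ^ n * (1 - t * z (k.succAbove i))) := by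
        intro k
        exact ih t (fun i => z (k.succAbove i)) (fun i => hz0 _) (fun S' hS' => by
          rw [show (∏ i ∈ S', z (k.succAbove i)) = ∏ x ∈ S'.map (Fin.succAboveEmb k), z x by
            rw [Finset.prod_map]; rfl]
          exact hS _ (Finset.Nonempty.map hS'))
      have hsum2 : ∀ k : Fin (n+1), (∑ π : Perm (Fin n), F (permE k π)) =
          ((-1 : ℂ)^(n - (k:ℕ)) * (((1 - z k) / z k)^(n+1) * (1 - t * Z)⁻¹)) *
          ((∏ i : Fin n, ∏ j ∈ Finset.Ioi i, (z (k.succAbove i) - z (k.succAbove j))) *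
            ∏ i : Fin n, (1 - z (k.succAbove i)) /
              (z (k.succAbove i) ^ n * (1 - t * z (k.succAbove i)))) := by
        intro k
        rw [Finset.sum_congr rfl (fun π _ => hFval k π), ← Finset.mul_sum, hIH k]
      refine Eq.trans (Finset.sum_congr rfl fun k _ => hsum2 k) ?_
      -- remaining: the k-sum
      have hE0 : ∀ k : Fin (n+1), (∏ j ∈ Finset.univ.erase k, (z k - z j)) ≠ 0 := fun k =>
        Finset.prod_ne_zero_iff.mpr fun j hj =>
          sub_ne_zero.mpr fun hc => (Finset.mem_erase.mp hj).1 (hinj hc.symm)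
      have hQ0 : ∀ k : Fin (n+1), (∏ i ∈ Finset.univ.erase k, z i) ≠ 0 := fun k =>
        Finset.prod_ne_zero_iff.mpr fun i _ => hz0 i
      have hprodsA : ∀ k : Fin (n+1),
          (∏ i : Fin n, z (k.succAbove i)) = ∏ i ∈ Finset.univ.erase k, z i := by
        intro k
        have h1 := Fin.prod_univ_succAbove z k
        have h2 := Finset.mul_prod_erase Finset.univ z (Finset.mem_univ k)
        exact mul_left_cancel₀ (hz0 k) (by rw [← h1, h2, ← hZ])
      have hPsp : ∀ k : Fin (n+1),
          (∏ i : Fin (n+1), (1 - z i) / (z i ^ (n+1) * (1 - t * z i)))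
          = ((1 - z k) / (z k ^ (n+1) * (1 - t * z k))) *
            ((∏ i : Fin n, (1 - z (k.succAbove i)) /
              (z (k.succAbove i) ^ n * (1 - t * z (k.succAbove i)))) *
              (∏ i ∈ Finset.univ.erase k, z i)⁻¹) := by
        intro k
        rw [Fin.prod_univ_succAbove (fun i => (1 - z i) / (z i ^ (n+1) * (1 - t * z i))) k]
        congr 1
        have hfac : ∀ i : Fin n, (1 - z (k.succAbove i)) /
            (z (k.succAbove i) ^ (n+1) * (1 - t * z (k.succAbove i)))
            = ((1 - z (k.succAbove i)) /
              (z (k.succAbove i) ^ n * (1 - t * z (k.succAbove i)))) * (z (k.succAbove i))⁻¹ := by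
          intro i
          simp only [pow_succ, div_eq_mul_inv, mul_inv]
          ring
        rw [Finset.prod_congr rfl (fun i _ => hfac i), Finset.prod_mul_distrib]
        congr 1
        rw [Finset.prod_inv_distrib, hprodsA k]
      have hterm : ∀ k : Fin (n+1),
          (((-1 : ℂ)^(n - (k:ℕ)) * (((1 - z k) / z k)^(n+1) * (1 - t * Z)⁻¹)) *
          ((∏ i : Fin n, ∏ j ∈ Finset.Ioi i, (z (k.succAbove i) - z (k.succAbove j))) *
            ∏ i : Fin n, (1 - z (k.succAbove i)) /
              (z (k.succAbove i) ^ n * (1 - t * z (k.succAbove i)))))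
          = (((1 - t * Z)⁻¹ * (-1:ℂ)^n) *
              ((∏ i : Fin (n+1), ∏ j ∈ Finset.Ioi i, (z i - z j)) *
                ∏ i : Fin (n+1), (1 - z i) / (z i ^ (n+1) * (1 - t * z i)))) *
            ((1 - z k)^n * (1 - t * z k) * (∏ i ∈ Finset.univ.erase k, z i) *
              (∏ j ∈ Finset.univ.erase k, (z k - z j))⁻¹) := by
        intro k
        have hkn : (k : ℕ) ≤ n := Nat.lt_succ_iff.mp k.isLt
        have hsgn2 : (-1:ℂ)^(n-(k:ℕ)) = (-1:ℂ)^n * (-1:ℂ)^(k:ℕ) := by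
          have h2k : (n - (k:ℕ)) + 2 * (k : ℕ) = n + (k:ℕ) := by omega
          calc (-1:ℂ)^(n-(k:ℕ)) = (-1:ℂ)^(n-(k:ℕ)) * ((-1:ℂ)^2)^(k:ℕ) := by norm_num
            _ = (-1:ℂ)^((n-(k:ℕ)) + 2 * (k:ℕ)) := by rw [← pow_mul, ← pow_add]
            _ = (-1:ℂ)^(n + (k:ℕ)) := by rw [h2k]
            _ = (-1:ℂ)^n * (-1:ℂ)^(k:ℕ) := pow_add _ _ _
        rw [Dsplit z k, hPsp k, hsgn2]
        have h0 : z k ≠ 0 := hz0 k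
        have h1 : 1 - t * z k ≠ 0 := h1tz k
        have he := hE0 k
        have hq := hQ0 k
        generalize (∏ i : Fin n, ∏ j ∈ Finset.Ioi i,
          (z (k.succAbove i) - z (k.succAbove j))) = d
        generalize (∏ i : Fin n, (1 - z (k.succAbove i)) /
          (z (k.succAbove i) ^ n * (1 - t * z (k.succAbove i)))) = p
        generalize hEe : (∏ j ∈ Finset.univ.erase k, (z k - z j)) = e at he ⊢
        generalize hQe : (∏ i ∈ Finset.univ.erase k, z i) = q at hq ⊢
        generalize (1 - t * Z)⁻¹ = w
        simp only [div_pow, div_eq_mul_inv, mul_inv, mul_pow, inv_pow]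
        have hc : (1 - t * z k) * (1 - t * z k)⁻¹ = 1 := mul_inv_cancel₀ h1
        have hqq : q * q⁻¹ = 1 := mul_inv_cancel₀ hq
        have hee : e * e⁻¹ = 1 := mul_inv_cancel₀ he
        linear_combination
          (-((-1:ℂ)^n * (-1:ℂ)^(k:ℕ) * (1 - z k)^(n+1) * ((z k)^(n+1))⁻¹ * w * d * p)) * hc +
          (-((-1:ℂ)^n * (-1:ℂ)^(k:ℕ) * (1 - z k)^(n+1) * ((z k)^(n+1))⁻¹ * w * d * p *
            ((1 - t * z k) * (1 - t * z k)⁻¹))) * hqq +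
          (-((-1:ℂ)^n * (-1:ℂ)^(k:ℕ) * (1 - z k)^(n+1) * ((z k)^(n+1))⁻¹ * w * d * p *
            ((1 - t * z k) * (1 - t * z k)⁻¹) * (q * q⁻¹))) * hee
      refine Eq.trans (Finset.sum_congr rfl fun k _ => hterm k) ?_
      rw [← Finset.mul_sum, lagrange_key n t z hz0 hinj, ← hZ]
      have hm1 : ((-1:ℂ)^n) * ((-1:ℂ)^n) = 1 := by rw [← mul_pow]; norm_num
      rw [show ((1 - t * Z)⁻¹ * (-1:ℂ)^n *
          ((∏ i : Fin (n+1), ∏ j ∈ Finset.Ioi i, (z i - z j)) *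
            ∏ i : Fin (n+1), (1 - z i) / (z i ^ (n+1) * (1 - t * z i)))) *
          ((-1:ℂ)^n * (1 - t * Z))
          = (((1 - t * Z)⁻¹ * (1 - t * Z)) * (((-1:ℂ)^n * (-1:ℂ)^n))) *
            ((∏ i : Fin (n+1), ∏ j ∈ Finset.Ioi i, (z i - z j)) *
              ∏ i : Fin (n+1), (1 - z i) / (z i ^ (n+1) * (1 - t * z i))) from by ring,
        inv_mul_cancel₀ htZ, hm1, one_mul, one_mul]
    · obtain ⟨a, b, hzab, hab⟩ := Function.not_injective_iff.mp hinj
      have hzswap : ∀ x, z (Equiv.swap a b x) = z x := by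
        intro x
        rcases eq_or_ne x a with rfl | hxa
        · rw [Equiv.swap_apply_left]; exact hzab.symm
        · rcases eq_or_ne x b with rfl | hxb
          · rw [Equiv.swap_apply_right]; exact hzab
          · rw [Equiv.swap_apply_of_ne_of_ne hxa hxb]
      have hrhs : (∏ i : Fin (n+1), ∏ j ∈ Finset.Ioi i, (z i - z j)) = 0 := by
        rcases hab.lt_or_gt with h | h
        · exact Finset.prod_eq_zero (Finset.mem_univ a)
            (Finset.prod_eq_zero (Finset.mem_Ioi.mpr h) (by rw [hzab, sub_self]))
        · exact Finset.prod_eq_zero (Finset.mem_univ b)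
            (Finset.prod_eq_zero (Finset.mem_Ioi.mpr h) (by rw [hzab.symm, sub_self]))
      rw [hrhs, zero_mul]
      set F : Perm (Fin (n+1)) → ℂ := fun σ => ((Equiv.Perm.sign σ : ℤ) : ℂ) *
        ∏ i : Fin (n+1), ((1 - z (σ i)) / z (σ i)) ^ ((i : ℕ) + 1) *
          (1 - t * ∏ j ∈ Finset.Iic i, z (σ j))⁻¹ with hF
      have key : ∀ σ, F (Equiv.swap a b * σ) = - F σ := by
        intro σ
        simp only [hF]
        have hprod : (∏ i : Fin (n+1),
            ((1 - z ((Equiv.swap a b * σ) i)) / z ((Equiv.swap a b * σ) i)) ^ ((i : ℕ) + 1) *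
            (1 - t * ∏ j ∈ Finset.Iic i, z ((Equiv.swap a b * σ) j))⁻¹)
            = ∏ i : Fin (n+1), ((1 - z (σ i)) / z (σ i)) ^ ((i : ℕ) + 1) *
            (1 - t * ∏ j ∈ Finset.Iic i, z (σ j))⁻¹ := by
          refine Finset.prod_congr rfl fun i _ => ?_
          have h1 : z ((Equiv.swap a b * σ) i) = z (σ i) := hzswap _
          have h2 : (∏ j ∈ Finset.Iic i, z ((Equiv.swap a b * σ) j))
              = ∏ j ∈ Finset.Iic i, z (σ j) :=
            Finset.prod_congr rfl fun j _ => hzswap _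
          rw [h1, h2]
        rw [hprod, map_mul, Equiv.Perm.sign_swap hab]
        push_cast
        ring
      have hrw : ∑ σ : Perm (Fin (n+1)), F σ = ∑ σ : Perm (Fin (n+1)), F (Equiv.swap a b * σ) :=
        (Fintype.sum_equiv (Equiv.mulLeft (Equiv.swap a b)) _ _ (fun σ => rfl)).symm
      rw [Finset.sum_congr rfl (fun σ _ => key σ), Finset.sum_neg_distrib] at hrw
      have h0 : ∑ σ : Perm (Fin (n+1)), F σ = 0 := by
        linear_combination hrw / 2
      exact h0

/-- Symmetrization identity with a Bernoulli density parameter `ρ`. -/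
theorem stmt8 (m : ℕ) (hm : 1 ≤ m) (ρ : ℂ) (z : Fin m → ℂ)
    (hz0 : ∀ i, z i ≠ 0) (hz1 : ∀ i, z i ≠ 1)
    (hρz : ∀ i, (1 - ρ) * z i ≠ 1)
    (hden : ∀ (σ : Equiv.Perm (Fin m)) (i : Fin m),
      (1 - ρ) * ∏ j ∈ Finset.Iic i, z (σ j) ≠ 1) :
    ∑ σ : Equiv.Perm (Fin m), ((Equiv.Perm.sign σ : ℤ) : ℂ) *
      ∏ i : Fin m, ((1 - z (σ i)) / z (σ i)) ^ ((i : ℕ) + 1) *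
        (1 - (1 - ρ) * ∏ j ∈ Finset.Iic i, z (σ j))⁻¹ =
    (∏ i : Fin m, ∏ j ∈ Finset.Ioi i, (z i - z j)) *
      ∏ i : Fin m, (1 - z i) / (z i ^ m * (1 - (1 - ρ) * z i)) := by
  have hS : ∀ S : Finset (Fin m), S.Nonempty → (1 - ρ) * ∏ i ∈ S, z i ≠ 1 := by
    intro S hSne
    classical
    obtain ⟨c, hc⟩ : ∃ c, S.card = c + 1 :=
      ⟨S.card - 1, by have := Finset.card_pos.mpr hSne; omega⟩
    have hcm : c < m := by
      have h1 := S.card_le_univ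
      simp only [Finset.card_univ, Fintype.card_fin] at h1
      omega
    set i : Fin m := ⟨c, hcm⟩ with hi
    have hcard : (Finset.Iic i).card = S.card := by
      rw [Fin.card_Iic, hc]
    have e : {x // x ∈ Finset.Iic i} ≃ {x // x ∈ S} := by
      apply Fintype.equivOfCardEq
      rw [Fintype.card_coe, Fintype.card_coe, hcard]
    set σ : Perm (Fin m) := e.extendSubtype with hσ
    have him : (Finset.Iic i).image σ = S := by
      apply Finset.eq_of_subset_of_card_le
      · intro y hy
        obtain ⟨x, hx, rfl⟩ := Finset.mem_image.mp hy
        exact e.extendSubtype_mem x hx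
      · rw [Finset.card_image_of_injective _ σ.injective, hcard]
    have hprod : ∏ j ∈ Finset.Iic i, z (σ j) = ∏ x ∈ S, z x := by
      rw [← him, Finset.prod_image (fun a _ b _ h => σ.injective h)]
    rw [← hprod]
    exact hden σ i
  exact aux_identity m (1 - ρ) z hz0 hS
end

section
/- The stochastic L-vertex weights sum to one: for any fixed occupation vector I ∈ (ℤ_{≥0})^n and incoming colour j ∈ {0,1,…,n}, the sum over all outgoing states (K, l) respecting path conservation I + e_j = K + e_l of L_{z,q,s}(I,j;K,l)·(-s)^{1_{l≥1}} equals 1, where the weights L are given by the six-case table: (I,0;I,0) ↦ (1-szq^{|I|})/(1-sz); (I,i;I,i) ↦ (z-sq^{I_i})q^{I_{[i+1,n]}}/(1-sz); (I,0;I−e_i,i) ↦ z(1-q^{I_i})q^{I_{[i+1,n]}}/(1-sz); (I,i;I+e_i,0) ↦ (1-s²q^{|I|})/(1-sz); (I,i;I+e_i−e_j,j) (i<j) ↦ z(1-q^{I_j})q^{I_{[j+1,n]}}/(1-sz); (I,j;I+e_j−e_i,i) (i<j) ↦ s(1-q^{I_i})q^{I_{[i+1,n]}}/(1-sz). -/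
/-! For `l ≠ j, l ≥ 1`, the weight `L(I,j;·,l)` is `z` or `s` (as `l > j` or `l < j`) times
`(1 - q^{I_l}) q^{I_{[l+1,n]}} / (1 - sz)`, an increment of `l ↦ q^{I_{[l,n]}}`. The sums over
`l < j` and `l > j` therefore telescope, and what remains is a rational identity in `s`, `z`,
`q^{I_j}` and `q^{I_{[j+1,n]}}`. -/

open scoped BigOperators

/-- `I_{[a,n]} = ∑_{k=a}^{n} I_k`. -/
noncomputable def Ltail (n : ℕ) (I : ℕ → ℕ) (a : ℕ) : ℕ :=
  ∑ k ∈ Finset.Icc a n, I k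

/-- The stochastic `L`-vertex weight with incoming states `(I, j)` and outgoing
colour `l` (the outgoing occupation vector is determined by path conservation
as `K = I + e_j - e_l`; the table entries vanish automatically for impossible
transitions).  Colours range over `0,…,n`, with `0` denoting an empty edge. -/
noncomputable def Lwt (n : ℕ) (z q s : ℂ) (I : ℕ → ℕ) (j l : ℕ) : ℂ :=
  if j = 0 ∧ l = 0 then (1 - s * z * q ^ (Ltail n I 1)) / (1 - s * z)
  else if j = l then (z - s * q ^ (I j)) * q ^ (Ltail n I (j + 1)) / (1 - s * z)
  else if j = 0 then z * (1 - q ^ (I l)) * q ^ (Ltail n I (l + 1)) / (1 - s * z)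
  else if l = 0 then (1 - s ^ 2 * q ^ (Ltail n I 1)) / (1 - s * z)
  else if j < l then z * (1 - q ^ (I l)) * q ^ (Ltail n I (l + 1)) / (1 - s * z)
  else s * (1 - q ^ (I l)) * q ^ (Ltail n I (l + 1)) / (1 - s * z)

open Finset

section Ltail

variable (n : ℕ) (I : ℕ → ℕ)

lemma Ltail_eq_add {a : ℕ} (ha : a ≤ n) : Ltail n I a = I a + Ltail n I (a + 1) := by
  rw [Ltail, Ltail, Icc_eq_cons_Ioc ha, sum_cons, Icc_add_one_left_eq_Ioc]

lemma Ltail_succ_self : Ltail n I (n + 1) = 0 := by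
  rw [Ltail, Icc_eq_empty (by omega), sum_empty]

/-- Since `q ^ I_{[l,n]} = q ^ I_l * q ^ I_{[l+1,n]}`, the summands are the increments of
`l ↦ q ^ I_{[l,n]}`. -/
lemma sum_Ico_one_sub_pow_mul_pow_Ltail (q : ℂ) {a b : ℕ} (hab : a ≤ b) (hb : b ≤ n + 1) :
    ∑ l ∈ Ico a b, (1 - q ^ I l) * q ^ Ltail n I (l + 1)
      = q ^ Ltail n I b - q ^ Ltail n I a := by
  rw [← sum_Ico_sub (fun l => q ^ Ltail n I l) hab]
  refine sum_congr rfl fun l hl => ?_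
  rw [Ltail_eq_add n I (a := l) (by grind), pow_add]
  ring

end Ltail

section Lwt

variable (n : ℕ) (z q s : ℂ) (I : ℕ → ℕ)

lemma Lwt_zero_zero : Lwt n z q s I 0 0 = (1 - s * z * q ^ Ltail n I 1) / (1 - s * z) :=
  if_pos ⟨rfl, rfl⟩

lemma Lwt_self {j : ℕ} (hj : j ≠ 0) :
    Lwt n z q s I j j = (z - s * q ^ I j) * q ^ Ltail n I (j + 1) / (1 - s * z) := by
  simp [Lwt, hj]

lemma Lwt_zero_right {j : ℕ} (hj : j ≠ 0) :
    Lwt n z q s I j 0 = (1 - s ^ 2 * q ^ Ltail n I 1) / (1 - s * z) := by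
  simp [Lwt, hj]

lemma Lwt_of_lt {j l : ℕ} (hjl : j < l) :
    Lwt n z q s I j l = z * (1 - q ^ I l) * q ^ Ltail n I (l + 1) / (1 - s * z) := by
  unfold Lwt
  split_ifs <;> first | rfl | omega

lemma Lwt_of_pos_of_lt {j l : ℕ} (hl : 0 < l) (hlj : l < j) :
    Lwt n z q s I j l = s * (1 - q ^ I l) * q ^ Ltail n I (l + 1) / (1 - s * z) := by
  unfold Lwt
  split_ifs <;> first | rfl | omega

lemma sum_Ico_Lwt_of_lt {j a b : ℕ} (hja : j < a) (hab : a ≤ b) (hb : b ≤ n + 1) :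
    ∑ l ∈ Ico a b, Lwt n z q s I j l
      = z / (1 - s * z) * (q ^ Ltail n I b - q ^ Ltail n I a) := by
  rw [← sum_Ico_one_sub_pow_mul_pow_Ltail n I q hab hb, mul_sum]
  refine sum_congr rfl fun l hl => ?_
  rw [Lwt_of_lt n z q s I (by grind)]
  ring

lemma sum_Ico_Lwt_of_le {j a b : ℕ} (ha : 0 < a) (hab : a ≤ b) (hbj : b ≤ j)
    (hb : b ≤ n + 1) :
    ∑ l ∈ Ico a b, Lwt n z q s I j l
      = s / (1 - s * z) * (q ^ Ltail n I b - q ^ Ltail n I a) := by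
  rw [← sum_Ico_one_sub_pow_mul_pow_Ltail n I q hab hb, mul_sum]
  refine sum_congr rfl fun l hl => ?_
  rw [Lwt_of_pos_of_lt n z q s I (by grind) (by grind)]
  ring

lemma sum_range_Lwt_mul (j : ℕ) :
    ∑ l ∈ range (n + 1), Lwt n z q s I j l * (if 1 ≤ l then -s else 1)
      = Lwt n z q s I j 0 - s * ∑ l ∈ Ico 1 (n + 1), Lwt n z q s I j l := by
  rw [range_eq_Ico, sum_eq_sum_Ico_succ_bot (by omega : 0 < n + 1), zero_add,
    if_neg (by omega), mul_one, sub_eq_add_neg, mul_sum, ← sum_neg_distrib]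
  congr 1
  refine sum_congr rfl fun l hl => ?_
  rw [if_pos (mem_Ico.mp hl).1]
  ring

end Lwt

theorem stmt11_general (n : ℕ) (z q s : ℂ) (hsz : s * z ≠ 1)
    (I : ℕ → ℕ) (j : ℕ) (hj : j ≤ n) :
    ∑ l ∈ Finset.range (n + 1),
      Lwt n z q s I j l * (if 1 ≤ l then -s else 1) = 1 := by
  have hc : (1 : ℂ) - s * z ≠ 0 := sub_ne_zero.mpr hsz.symm
  rw [sum_range_Lwt_mul]
  rcases Nat.eq_zero_or_pos j with rfl | hj0
  · rw [Lwt_zero_zero, sum_Ico_Lwt_of_lt n z q s I zero_lt_one (by omega) le_rfl,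
      Ltail_succ_self]
    field_simp
    ring
  · rw [Lwt_zero_right n z q s I hj0.ne',
      ← sum_Ico_consecutive _ (by omega : 1 ≤ j) (by omega : j ≤ n + 1),
      sum_eq_sum_Ico_succ_bot (by omega : j < n + 1), Lwt_self n z q s I hj0.ne',
      sum_Ico_Lwt_of_le n z q s I one_pos (by omega) le_rfl (by omega),
      sum_Ico_Lwt_of_lt n z q s I (Nat.lt_succ_self j) (by omega) le_rfl, Ltail_succ_self,
      Ltail_eq_add n I hj, pow_add]
    field_simp
    ring

/-- Stochasticity: the `L`-weights, corrected by `(-s)^{1_{l ≥ 1}}`, sum to one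
over all outgoing states respecting path conservation. -/
theorem stmt11 (n : ℕ) (hn : 1 ≤ n) (z q s : ℂ) (hsz : s * z ≠ 1)
    (I : ℕ → ℕ) (j : ℕ) (hj : j ≤ n) :
    ∑ l ∈ Finset.range (n + 1),
      Lwt n z q s I j l * (if 1 ≤ l then -s else 1) = 1 :=
  stmt11_general n z q s hsz I j hj
end

section
/- For the two-particle 2-TASEP boundary condition check: the function P(ν, p) = ∑_{π∈S_n} sgn(π) ∏_{i=1}^n ((1-z_i)/(1-z_{π_i}))^i z_{π_i}^{ν_i} ∏_{i=1}^m ∏_{j=1}^{p_i} 1/(1-z_{π_j}) · ∑_{σ∈S_m} sgn(σ) ∏_{i=1}^m ((1-u_i)/(1-u_{σ_i}))^i ∏_{j=1}^{p_i-1}(u_{σ_i}-z_{π_j}) vanishes under the boundary specialization ν_{l+1} = ν_l whenever l ∈ p and l+1 ∉ p (type-2 particle immediately left of type-1 at the same site). -/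
/-!
Right multiplication by the transposition `s = (l l+1)` pairs the permutations `π` and `π * s`,
whose signs are opposite. The `z`-part of the `π`-summand is, up to a factor independent of `π`,
`∏ j, (1 - z (π j))⁻¹ ^ e j * z (π j) ^ ν j` with pole orders `e j = j + 1 + #{i | j ≤ p i}`;
since `l ∈ p` and `l + 1 ∉ p` we get `e l = e (l + 1)`, and `ν l = ν (l + 1)`, so this part is
`s`-invariant. The `u`-part sees `π` only through the sets `π '' Iio (p i)`, which `s` preserves
because no `p i` equals `l + 1`. Hence the summands cancel in pairs.
-/

open Equiv Finset

theorem sum_sign_mul_eq_zero_of_mul_swap {α R : Type*} [Fintype α] [DecidableEq α] [CommRing R]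
    {a b : α} (hab : a ≠ b) {F : Perm α → R} (hF : ∀ π, F (π * swap a b) = F π) :
    ∑ π : Perm α, ((Perm.sign π : ℤ) : R) * F π = 0 := by
  refine sum_ninvolution (· * swap a b) (fun π => ?_) (fun π _ => ?_) (fun _ => mem_univ _)
    (fun π => by simp [mul_assoc])
  · rw [hF, Perm.sign_mul, Perm.sign_swap hab]
    push_cast
    ring
  · simpa using hab

theorem Finset.prod_comp_swap {α M : Type*} [DecidableEq α] [CommMonoid M] {s : Finset α}
    {a b : α} (h : a ∈ s ↔ b ∈ s) (f : α → M) :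
    ∏ x ∈ s, f (swap a b x) = ∏ x ∈ s, f x := by
  refine prod_equiv (swap a b) (fun x => ?_) fun _ _ => rfl
  rw [swap_apply_def]
  split_ifs with hxa hxb <;> simp_all

theorem Fintype.prod_mul_apply_eq_of_invariant {α M : Type*} [Fintype α] [CommMonoid M]
    (π σ : Perm α) (g : α → α → M) (hg : ∀ x j, g x (σ j) = g x j) :
    ∏ j, g ((π * σ) j) j = ∏ j, g (π j) j :=
  Fintype.prod_equiv σ _ _ fun j => (hg _ j).symm

theorem Finset.prod_prod_Iic_eq_prod_pow {ι α M : Type*} [Fintype ι] [Fintype α] [LinearOrder α]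
    [LocallyFiniteOrderBot α] [CommMonoid M] (p : ι → α) (w : α → M) :
    ∏ i, ∏ j ∈ Iic (p i), w j = ∏ j, w j ^ #{i | j ≤ p i} := by
  rw [prod_comm' (t' := univ) (s' := fun j => ({i | j ≤ p i} : Finset ι)) (by simp)]
  simp only [prod_const]

def poleOrder {n m : ℕ} (p : Fin m → Fin n) (j : Fin n) : ℕ :=
  j + 1 + #{i | j ≤ p i}

theorem poleOrder_eq_of_mem_of_succ_notMem {n m : ℕ} {p : Fin m → Fin n}
    (hp : Function.Injective p) {l : Fin n} (hl : (l : ℕ) + 1 < n) (hin : ∃ i, p i = l)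
    (hout : ∀ i, (p i : ℕ) ≠ l + 1) : poleOrder p l = poleOrder p ⟨l + 1, hl⟩ := by
  obtain ⟨i₀, hi₀⟩ := hin
  have hsplit : univ.filter (l ≤ p ·) = insert i₀ (univ.filter (⟨l + 1, hl⟩ ≤ p ·)) := by
    ext i
    simp only [mem_filter, mem_insert, mem_univ, true_and, Fin.le_def]
    constructor
    · intro h
      rcases h.eq_or_lt with h | h
      · exact .inl (hp (Fin.ext (by omega)))
      · exact .inr (by have := hout i; omega)
    · rintro (rfl | h) <;> omega
  have hi₀_notMem : i₀ ∉ (univ.filter (⟨l + 1, hl⟩ ≤ p ·) : Finset (Fin m)) := by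
    simp [hi₀, Fin.le_def]
  rw [poleOrder, poleOrder, hsplit, card_insert_of_notMem hi₀_notMem]
  simp only
  omega

theorem prod_div_pow_mul_prod_prod_Iic_inv {n m : ℕ} (z : Fin n → ℂ) (p : Fin m → Fin n)
    (ν : Fin n → ℤ) (π : Perm (Fin n)) :
    (∏ i, ((1 - z i) / (1 - z (π i))) ^ ((i : ℕ) + 1) * z (π i) ^ (ν i)) *
        ∏ i, ∏ j ∈ Iic (p i), (1 - z (π j))⁻¹ =
      (∏ i, (1 - z i) ^ ((i : ℕ) + 1)) *
        ∏ j, (1 - z (π j))⁻¹ ^ poleOrder p j * z (π j) ^ (ν j) := by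
  rw [prod_prod_Iic_eq_prod_pow, ← prod_mul_distrib, ← prod_mul_distrib]
  refine prod_congr rfl fun j _ => ?_
  rw [poleOrder, div_eq_mul_inv, mul_pow, pow_add]
  ring

theorem prod_div_pow_mul_prod_prod_Iic_inv_mul_swap {n m : ℕ} (z : Fin n → ℂ)
    (p : Fin m → Fin n) (ν : Fin n → ℤ) (π : Perm (Fin n)) {a b : Fin n}
    (hpole : poleOrder p a = poleOrder p b) (hν : ν a = ν b) :
    (∏ i, ((1 - z i) / (1 - z ((π * swap a b) i))) ^ ((i : ℕ) + 1) *
          z ((π * swap a b) i) ^ (ν i)) *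
        ∏ i, ∏ j ∈ Iic (p i), (1 - z ((π * swap a b) j))⁻¹ =
      (∏ i, ((1 - z i) / (1 - z (π i))) ^ ((i : ℕ) + 1) * z (π i) ^ (ν i)) *
        ∏ i, ∏ j ∈ Iic (p i), (1 - z (π j))⁻¹ := by
  rw [prod_div_pow_mul_prod_prod_Iic_inv, prod_div_pow_mul_prod_prod_Iic_inv]
  congr 1
  exact Fintype.prod_mul_apply_eq_of_invariant π _
    (fun x j => (1 - z x)⁻¹ ^ poleOrder p j * z x ^ ν j)
    fun x j => by rw [apply_swap_eq_self hpole, apply_swap_eq_self hν]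

theorem sum_sign_mul_prod_prod_Iio_mul_swap {n m : ℕ} (z : Fin n → ℂ) (u : Fin m → ℂ)
    (p : Fin m → Fin n) (π : Perm (Fin n)) {a b : Fin n} (hab : ∀ i, a < p i ↔ b < p i) :
    ∑ σ : Perm (Fin m), ((Perm.sign σ : ℤ) : ℂ) *
        (∏ i, ((1 - u i) / (1 - u (σ i))) ^ ((i : ℕ) + 1)) *
        ∏ i, ∏ j ∈ Iio (p i), (u (σ i) - z ((π * swap a b) j)) =
      ∑ σ : Perm (Fin m), ((Perm.sign σ : ℤ) : ℂ) *
        (∏ i, ((1 - u i) / (1 - u (σ i))) ^ ((i : ℕ) + 1)) *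
        ∏ i, ∏ j ∈ Iio (p i), (u (σ i) - z (π j)) := by
  refine sum_congr rfl fun σ _ => congrArg _ (prod_congr rfl fun i _ => ?_)
  exact prod_comp_swap (by simpa using hab i) fun j => u (σ i) - z (π j)

theorem stmt17_general (n m : ℕ) (z : Fin n → ℂ) (u : Fin m → ℂ)
    (p : Fin m → Fin n) (hp : StrictMono p)
    (ν : Fin n → ℤ) (l : Fin n) (hl : (l : ℕ) + 1 < n)
    (hin : ∃ i, p i = l) (hout : ∀ i, (p i : ℕ) ≠ (l : ℕ) + 1)
    (hν : ν ⟨(l : ℕ) + 1, hl⟩ = ν l) :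
    (∑ π : Equiv.Perm (Fin n), ((Equiv.Perm.sign π : ℤ) : ℂ) *
      (∏ i : Fin n, ((1 - z i) / (1 - z (π i))) ^ ((i : ℕ) + 1) *
        z (π i) ^ (ν i)) *
      (∏ i : Fin m, ∏ j ∈ Finset.Iic (p i), (1 - z (π j))⁻¹) *
      ∑ σ : Equiv.Perm (Fin m), ((Equiv.Perm.sign σ : ℤ) : ℂ) *
        (∏ i : Fin m, ((1 - u i) / (1 - u (σ i))) ^ ((i : ℕ) + 1)) *
        ∏ i : Fin m, ∏ j ∈ Finset.Iio (p i), (u (σ i) - z (π j))) = 0 := by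
  have hll' : l ≠ ⟨l + 1, hl⟩ := Fin.ne_of_val_ne (by simp)
  have hpole := poleOrder_eq_of_mem_of_succ_notMem hp.injective hl hin hout
  have hIio : ∀ i, l < p i ↔ ⟨l + 1, hl⟩ < p i := fun i => by
    have := hout i
    simp only [Fin.lt_def]
    omega
  refine (sum_congr rfl fun π _ => by rw [mul_assoc, mul_assoc]).trans
    (sum_sign_mul_eq_zero_of_mul_swap hll' fun π => ?_)
  rw [← mul_assoc, ← mul_assoc, prod_div_pow_mul_prod_prod_Iic_inv_mul_swap z p ν π hpole hν.symm,
    sum_sign_mul_prod_prod_Iio_mul_swap z u p π hIio]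

/-- Boundary condition (1) for the nested Bethe ansatz eigenfunction of the
2-TASEP: if site index `l` carries a type-2 particle (`l ∈ p`) and `l+1` does
not (`l+1 ∉ p`), then the eigenfunction `P(ν, p)` vanishes under the
specialization `ν_{l+1} = ν_l`. -/
theorem stmt17 (n m : ℕ) (hmn : m ≤ n) (z : Fin n → ℂ) (u : Fin m → ℂ)
    (hzinj : Function.Injective z) (hz1 : ∀ i, z i ≠ 1) (hu1 : ∀ i, u i ≠ 1)
    (p : Fin m → Fin n) (hp : StrictMono p)
    (ν : Fin n → ℤ) (l : Fin n) (hl : (l : ℕ) + 1 < n)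
    (hin : ∃ i, p i = l) (hout : ∀ i, (p i : ℕ) ≠ (l : ℕ) + 1)
    (hν : ν ⟨(l : ℕ) + 1, hl⟩ = ν l) :
    (∑ π : Equiv.Perm (Fin n), ((Equiv.Perm.sign π : ℤ) : ℂ) *
      (∏ i : Fin n, ((1 - z i) / (1 - z (π i))) ^ ((i : ℕ) + 1) *
        z (π i) ^ (ν i)) *
      (∏ i : Fin m, ∏ j ∈ Finset.Iic (p i), (1 - z (π j))⁻¹) *
      ∑ σ : Equiv.Perm (Fin m), ((Equiv.Perm.sign σ : ℤ) : ℂ) *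
        (∏ i : Fin m, ((1 - u i) / (1 - u (σ i))) ^ ((i : ℕ) + 1)) *
        ∏ i : Fin m, ∏ j ∈ Finset.Iio (p i), (u (σ i) - z (π j))) = 0 :=
  stmt17_general n m z u p hp ν l hl hin hout hν
end
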